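/- Let r > 1 be an integer and n a positive integer. Then Q_{2^r}(n) = 0 when n is odd; and when n is even, Q_{2^r}(n) = ⌈(1/2)·⌊(n−1)/(2^r−1)⌋⌉ − ε, where ε = ⌊n/2^r⌋ mod 2 if 2^r divides n and ε = 0 otherwise. -/

import Mathlib

/-- `q n` is the number of partitions of `n` into odd parts. -/
def q (n : ℕ) : ℕ := (Nat.Partition.odds n).card

/-- The multinomial coefficient of a partition: if the part `i` occurs with
multiplicity `t_i`, it equals `(∑ t_i)! / ∏ (t_i)!`. -/
def partitionMultinomial {n : ℕ} (c : n.Partition) : ℕ :=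
  Nat.multinomial c.parts.toFinset fun i => Multiset.count i c.parts

/-- `Q k n` is the number of partitions of `n` into odd parts whose
multinomial coefficient equals `k`. -/
def Q (k n : ℕ) : ℕ :=
  ((Nat.Partition.odds n).filter fun c => partitionMultinomial c = k).card

/-!
A multinomial coefficient is divisible by each binomial coefficient `C(N, t)`, where `N` is the
number of parts (with multiplicity) and `t` the multiplicity of one of them. A binomial
coefficient `C(N, k)` that is a prime power is at most `N` (Kummer), while `N < C(N, k)` for
`2 ≤ k ≤ N - 2`. Hence a partition with multinomial coefficient `2^r` has exactly two distinct
parts, with multiplicities `1` and `2^r - 1` (three distinct parts of multiplicity `1` would give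
`(#parts)!`, divisible by `6`). So `Q_{2^r}(n)` counts the odd `b` with `n - (2^r - 1) b` odd,
positive and different from `b`: there are none when `n` is odd, and otherwise these are the odd
`b ≤ ⌊(n-1)/(2^r-1)⌋` except `b = n / 2^r`.
-/

open Finset

namespace Nat

theorem add_lt_choose_of_two_le {a b : ℕ} (ha : 2 ≤ a) (hb : 2 ≤ b) :
    a + b < (a + b).choose a := by
  wlog hba : b ≤ a generalizing a b
  · rw [choose_symm_add, add_comm]
    exact this hb ha (by omega)
  calc a + b ≤ 2 * a := by omega
    _ < (a + 2).choose 2 := by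
        rw [choose_two_right, show a + 2 - 1 = a + 1 by omega]
        exact (Nat.le_div_iff_mul_le two_pos).2 (by nlinarith)
    _ = (a + 2).choose a := choose_symm_add.symm
    _ ≤ (a + b).choose a := choose_le_choose a (by omega)

theorem choose_le_of_eq_prime_pow {p N k e : ℕ} (hp : p.Prime) (hN : 0 < N)
    (h : N.choose k = p ^ e) : N.choose k ≤ N := by
  simpa [h, hp.factorization_self] using pow_factorization_choose_le (p := p) (k := k) hN

theorem add_choose_ne_prime_pow {p a b e : ℕ} (hp : p.Prime) (ha : 2 ≤ a) (hb : 2 ≤ b) :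
    (a + b).choose a ≠ p ^ e := fun h =>
  (add_lt_choose_of_two_le ha hb).not_ge (choose_le_of_eq_prime_pow hp (by omega) h)

variable {α : Type*} [DecidableEq α] {s : Finset α} {f : α → ℕ} {a : α}

theorem choose_dvd_multinomial (ha : a ∈ s) :
    (f a + ∑ i ∈ s.erase a, f i).choose (f a) ∣ multinomial s f := by
  have h := multinomial_insert (notMem_erase a s) f
  rw [insert_erase ha] at h
  exact h ▸ dvd_mul_right _ _

theorem exists_pair_of_multinomial_eq_prime_pow {p e : ℕ} (hp : p.Prime) (he : e ≠ 0)
    (hf : ∀ i ∈ s, f i ≠ 0) (h : multinomial s f = p ^ e) :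
    ∃ a b, a ≠ b ∧ s = {a, b} ∧ f a = 1 ∧ f b + 1 = p ^ e := by
  have hpe : 1 < p ^ e := Nat.one_lt_pow he hp.one_lt
  have hsmall : ∀ a ∈ s, f a = 1 ∨ ∑ i ∈ s.erase a, f i ≤ 1 := by
    intro a ha
    by_contra! ⟨ha1, hrest⟩
    obtain ⟨i, -, hi⟩ := (Nat.dvd_prime_pow hp).1 (h ▸ choose_dvd_multinomial ha)
    exact add_choose_ne_prime_pow hp (by have := hf a ha; omega) hrest hi
  obtain hcard | hcard | hcard : #s ≤ 1 ∨ #s = 2 ∨ 3 ≤ #s := by omega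
  · rcases Nat.le_one_iff_eq_zero_or_eq_one.1 hcard with hcard | hcard
    · rw [Finset.card_eq_zero.1 hcard, multinomial_empty] at h
      omega
    · obtain ⟨a, rfl⟩ := Finset.card_eq_one.1 hcard
      rw [multinomial_singleton] at h
      omega
  · obtain ⟨a, b, hab, rfl⟩ := Finset.card_eq_two.1 hcard
    have hfb := hf b (by simp)
    rcases hsmall a (mem_insert_self a {b}) with ha1 | hb1
    · exact ⟨a, b, hab, rfl, ha1, by rw [← h, binomial_one hab ha1]⟩
    · rw [erase_insert (by simpa using hab), sum_singleton] at hb1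
      replace hb1 : f b = 1 := by omega
      exact ⟨b, a, hab.symm, pair_comm a b, hb1,
        by rw [← h, pair_comm, binomial_one hab.symm hb1]⟩
  · have hf1 : ∀ a ∈ s, f a = 1 := by
      intro a ha
      refine (hsmall a ha).resolve_right fun hrest => ?_
      have hcard_le : #(s.erase a) ≤ ∑ i ∈ s.erase a, f i := by
        simpa using card_nsmul_le_sum (s.erase a) f 1
          fun i hi => Nat.one_le_iff_ne_zero.2 (hf i (mem_of_mem_erase hi))
      rw [card_erase_of_mem ha] at hcard_le
      omega
    have hfact : multinomial s f = (#s)! := by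
      have hprod : ∏ i ∈ s, (f i)! = 1 :=
        prod_eq_one fun i hi => by rw [hf1 i hi, factorial_one]
      have hsum : ∑ i ∈ s, f i = #s := by
        rw [sum_congr rfl hf1, sum_const, smul_eq_mul, mul_one]
      simpa [hprod, hsum] using multinomial_spec s f
    have hdvd : ∀ q, q.Prime → q ≤ 3 → q = p := fun q hq hq3 =>
      (Nat.prime_dvd_prime_iff_eq hq hp).1
        (hq.dvd_of_dvd_pow (h ▸ hfact ▸ Nat.dvd_factorial hq.pos (by omega)))
    exact absurd ((hdvd 2 prime_two (by norm_num)).trans (hdvd 3 prime_three le_rfl).symm)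
      (by norm_num)

end Nat

theorem Multiset.eq_of_cons_replicate_eq {α : Type*} {a a' b b' : α} {m : ℕ} (hm : 2 ≤ m)
    (h : a ::ₘ replicate m b = a' ::ₘ replicate m b') : b = b' := by
  classical
  by_contra hne
  have hcount := congrArg (count b) h
  simp only [count_cons, count_replicate_self, count_replicate, if_neg (Ne.symm hne)] at hcount
  split_ifs at hcount <;> omega

namespace Nat.Partition

theorem mem_odds {n : ℕ} {c : n.Partition} : c ∈ odds n ↔ ∀ i ∈ c.parts, ¬Even i := by
  simp [odds, restricted]

def consReplicate {n m b : ℕ} (hb : 0 < b) (h : m * b < n) : n.Partition where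
  parts := (n - m * b) ::ₘ Multiset.replicate m b
  parts_pos := by
    simp only [Multiset.mem_cons, Multiset.mem_replicate]
    rintro i (rfl | ⟨-, rfl⟩) <;> omega
  parts_sum := by
    rw [Multiset.sum_cons, Multiset.sum_replicate, smul_eq_mul]
    omega

end Nat.Partition

theorem partitionMultinomial_eq_of_parts_eq_cons_replicate {n a b m : ℕ} {c : n.Partition}
    (hab : a ≠ b) (hc : c.parts = a ::ₘ Multiset.replicate m b) :
    partitionMultinomial c = m + 1 := by
  have ha : a ∉ Multiset.replicate m b := fun h => hab (Multiset.eq_of_mem_replicate h)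
  have hsub : c.parts.toFinset ⊆ {a, b} := by
    intro x
    simp only [hc, Multiset.toFinset_cons, Multiset.toFinset_replicate, mem_insert, mem_singleton]
    split_ifs <;> simp_all
  rw [partitionMultinomial, Nat.multinomial_congr_of_sdiff hsub
    (fun x hx => Multiset.count_eq_zero.2 (by simpa using (mem_sdiff.1 hx).2)) fun _ _ => rfl,
    Nat.binomial_one hab (by simp [hc, ha])]
  simp [hc, Ne.symm hab]

theorem partitionMultinomial_eq_iff_of_isPrimePow {n m : ℕ} (hm : IsPrimePow (m + 1))
    (c : n.Partition) :
    partitionMultinomial c = m + 1 ↔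
      ∃ a b, a ≠ b ∧ c.parts = a ::ₘ Multiset.replicate m b := by
  refine ⟨fun h => ?_, fun ⟨a, b, hab, hc⟩ =>
    partitionMultinomial_eq_of_parts_eq_cons_replicate hab hc⟩
  obtain ⟨p, e, hp, he, hpe⟩ := (isPrimePow_nat_iff _).1 hm
  obtain ⟨a, b, hab, hs, ha, hb⟩ := Nat.exists_pair_of_multinomial_eq_prime_pow hp he.ne'
    (fun i hi => Multiset.count_ne_zero.2 (Multiset.mem_toFinset.1 hi)) (h.trans hpe.symm)
  refine ⟨a, b, hab, Multiset.ext.2 fun x => ?_⟩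
  by_cases hxa : x = a
  · subst hxa
    rw [ha, Multiset.count_cons_self,
      Multiset.count_eq_zero.2 fun h => hab (Multiset.eq_of_mem_replicate h)]
  by_cases hxb : x = b
  · subst hxb
    rw [Multiset.count_cons_of_ne (Ne.symm hab), Multiset.count_replicate_self]
    omega
  have hx : x ∉ c.parts := fun hx => by simpa [hs, hxa, hxb] using Multiset.mem_toFinset.2 hx
  rw [Multiset.count_eq_zero.2 hx, Multiset.count_cons_of_ne hxa,
    Multiset.count_eq_zero.2 fun h => hxb (Multiset.eq_of_mem_replicate h)]

theorem Q_eq_card_of_isPrimePow {m n : ℕ} (hm : IsPrimePow (m + 1)) (hm2 : 2 ≤ m) :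
    Q (m + 1) n =
      #{b ∈ range n | m * b < n ∧ Odd b ∧ Odd (n - m * b) ∧ n - m * b ≠ b} := by
  symm
  refine card_bij (fun b hb => Nat.Partition.consReplicate (mem_filter.1 hb).2.2.1.pos
    (mem_filter.1 hb).2.1) ?_ ?_ ?_
  · intro b hb
    obtain ⟨-, -, hb, ha, hab⟩ := mem_filter.1 hb
    rw [mem_filter, Nat.Partition.mem_odds, partitionMultinomial_eq_iff_of_isPrimePow hm]
    refine ⟨?_, _, _, hab, rfl⟩
    simp only [Nat.Partition.consReplicate, Multiset.mem_cons, Multiset.mem_replicate,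
      Nat.not_even_iff_odd]
    rintro i (rfl | ⟨-, rfl⟩) <;> assumption
  · intro b₁ _ b₂ _ h
    exact Multiset.eq_of_cons_replicate_eq hm2 (congrArg Nat.Partition.parts h)
  · intro c hc
    rw [mem_filter, Nat.Partition.mem_odds, partitionMultinomial_eq_iff_of_isPrimePow hm] at hc
    obtain ⟨hodd, a, b, hab, hc⟩ := hc
    have hsum : a + m * b = n := by
      simpa [hc, Multiset.sum_replicate] using c.parts_sum
    have ha : Odd a := Nat.not_even_iff_odd.1 (hodd a (by simp [hc]))
    have hb : Odd b := Nat.not_even_iff_odd.1 (hodd b (by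
      rw [hc]
      exact Multiset.mem_cons_of_mem (Multiset.mem_replicate.2 ⟨by omega, rfl⟩)))
    have hbn : b ≤ m * b := Nat.le_mul_of_pos_left b (by omega)
    have hn : n - m * b = a := by omega
    have ha0 := ha.pos
    refine ⟨b, mem_filter.2 ⟨mem_range.2 (by omega), by omega, hb, hn ▸ ha, hn ▸ hab⟩,
      Nat.Partition.ext ?_⟩
    simp [Nat.Partition.consReplicate, hc, hn]

theorem Nat.div_add_one_le_sub_one_div {m : ℕ} (hm : 0 < m) (n : ℕ) :
    n / (m + 1) ≤ (n - 1) / m := by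
  rw [Nat.le_div_iff_mul_le hm]
  have h := Nat.div_mul_le_self n (m + 1)
  rw [mul_add_one] at h
  rcases (n / (m + 1)).eq_zero_or_pos with h0 | h0
  · simp [h0]
  · omega

theorem card_filter_odd_range (M : ℕ) :
    (#{b ∈ range (M + 1) | Odd b} : ℤ) = ⌈(M : ℚ) / 2⌉ := by
  have h := Nat.count_modEq_card_eq_ceil (r := 2) (b := M + 1) two_pos 1
  rw [Nat.count_eq_card_filter_range] at h
  push_cast at h
  rw [add_sub_cancel_right] at h
  simpa [Nat.ModEq, Nat.odd_iff] using h

theorem card_filter_odd_mul_eq {k n : ℕ} {s : Finset ℕ} (hk : 0 < k) (hs : n / k ∈ s) :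
    #{b ∈ s | Odd b ∧ k * b = n} = if k ∣ n then n / k % 2 else 0 := by
  split_ifs with hkn
  · obtain ⟨t, rfl⟩ := hkn
    rw [Nat.mul_div_cancel_left t hk] at hs ⊢
    calc #{b ∈ s | Odd b ∧ k * b = k * t} = #{b ∈ {t} | Odd b} := by
          congr 1
          ext b
          simp only [mem_filter, mem_singleton, mul_right_inj' hk.ne']
          grind
      _ = t % 2 := by
          rw [filter_singleton]
          split_ifs with ht
          · simp [Nat.odd_iff.1 ht]
          · simp [Nat.odd_iff] at ht
            simp [ht]
  · rw [card_eq_zero, filter_eq_empty_iff]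
    rintro b - ⟨-, rfl⟩
    exact hkn (dvd_mul_right k b)

theorem card_filter_odd_mul_ne {k n M : ℕ} (hk : 0 < k) (hM : n / k ≤ M) :
    (#{b ∈ range (M + 1) | Odd b ∧ k * b ≠ n} : ℤ) =
      ⌈(M : ℚ) / 2⌉ - if k ∣ n then ((n / k : ℕ) % 2 : ℤ) else 0 := by
  have hsplit := card_filter_add_card_filter_not (s := {b ∈ range (M + 1) | Odd b}) (k * · = n)
  rw [filter_filter, filter_filter,
    card_filter_odd_mul_eq hk (mem_range.2 (Nat.lt_succ_of_le hM))] at hsplit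
  rw [← card_filter_odd_range, ← hsplit]
  split_ifs <;> push_cast <;> ring

theorem filter_range_eq_of_odd_of_even {m n : ℕ} (hm : Odd m) (hn : Even n) (hn0 : 0 < n) :
    {b ∈ range n | m * b < n ∧ Odd b ∧ Odd (n - m * b) ∧ n - m * b ≠ b} =
      {b ∈ range ((n - 1) / m + 1) | Odd b ∧ (m + 1) * b ≠ n} := by
  ext b
  simp only [mem_filter, mem_range, Nat.lt_succ_iff, Nat.le_div_iff_mul_le hm.pos, add_one_mul,
    mul_comm b m]
  have hmb : b ≤ m * b := Nat.le_mul_of_pos_left b hm.pos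
  constructor
  · rintro ⟨-, hbn, hb, -, hab⟩
    exact ⟨by omega, hb, by omega⟩
  · rintro ⟨hbn, hb, hab⟩
    exact ⟨by omega, by omega, hb, Nat.Even.sub_odd (by omega) hn (hm.mul hb), by omega⟩

theorem Q_two_pow (n r : ℕ) (hr : 1 < r) (hn : 0 < n) :
    (Odd n → Q (2 ^ r) n = 0) ∧
    (Even n → (Q (2 ^ r) n : ℤ) =
      ⌈(⌊((n : ℚ) - 1) / ((2 : ℚ) ^ r - 1)⌋ : ℚ) / 2⌉ -
        (if 2 ^ r ∣ n then ((n / 2 ^ r : ℕ) % 2 : ℤ) else 0)) := by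
  obtain ⟨m, hm⟩ : ∃ m, 2 ^ r = m + 1 :=
    ⟨2 ^ r - 1, (Nat.sub_add_cancel Nat.one_le_two_pow).symm⟩
  have hm3 : 3 ≤ m := by
    have := Nat.pow_le_pow_right two_pos hr
    omega
  have hm_odd : Odd m := by
    have : Even (2 ^ r) := (Nat.even_pow' (by omega)).2 even_two
    rw [hm, Nat.even_add_one] at this
    exact Nat.not_even_iff_odd.1 this
  have hQ := Q_eq_card_of_isPrimePow (n := n)
    (hm ▸ Nat.prime_two.isPrimePow.pow (by omega)) (by omega)
  rw [← hm] at hQ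
  refine ⟨fun hn_odd => ?_, fun hn_even => ?_⟩
  · rw [hQ, card_eq_zero, filter_eq_empty_iff]
    rintro b - ⟨-, hb, ha, -⟩
    exact Nat.not_even_iff_odd.2 ha (Nat.Odd.sub_odd hn_odd (hm_odd.mul hb))
  · have hfloor : ⌊((n : ℚ) - 1) / ((2 : ℚ) ^ r - 1)⌋ = ((n - 1) / m : ℕ) := by
      have hm_cast : (2 : ℚ) ^ r - 1 = m := by
        rw [sub_eq_iff_eq_add]
        exact_mod_cast hm
      rw [← Nat.cast_pred hn, hm_cast, Rat.floor_natCast_div_natCast, Int.natCast_div]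
    rw [hQ, filter_range_eq_of_odd_of_even hm_odd hn_even hn, ← hm, hfloor, Int.cast_natCast,
      card_filter_odd_mul_ne (by omega) (hm ▸ Nat.div_add_one_le_sub_one_div hm_odd.pos n)]
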